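/- Let X, Y be Banach spaces, Q a continuous k-homogeneous polynomial from X to Y with ‖Q‖ = 1, and 0 ≤ α ≤ 1. If there exists a surjective linear isometry T : Y → Y with classical numerical radius v(T) ≤ α, then n_Q^{(k)}(X, Y) ≤ α. -/

import Mathlib

noncomputable section

/-- `P : X → Y` is a continuous `k`-homogeneous polynomial: it is given by a continuous
`k`-linear map evaluated on the diagonal. -/
def IsHomPoly (𝕜 : Type*) [RCLike 𝕜] {X Y : Type*} [NormedAddCommGroup X] [NormedSpace 𝕜 X]
    [NormedAddCommGroup Y] [NormedSpace 𝕜 Y] (k : ℕ) (P : X → Y) : Prop :=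
  ∃ A : ContinuousMultilinearMap 𝕜 (fun _ : Fin k => X) Y, ∀ x, P x = A (fun _ => x)

/-- The norm of a polynomial: the supremum of `‖P x‖` over the closed unit ball. -/
def polyNorm {X Y : Type*} [NormedAddCommGroup X] [NormedAddCommGroup Y] (P : X → Y) : ℝ :=
  sSup { r : ℝ | ∃ x : X, ‖x‖ ≤ 1 ∧ r = ‖P x‖ }

/-- `v_{Q,δ}(P)`. -/
def vQdelta (𝕜 : Type*) [RCLike 𝕜] {X Y : Type*} [NormedAddCommGroup X] [NormedSpace 𝕜 X]
    [NormedAddCommGroup Y] [NormedSpace 𝕜 Y] (Q P : X → Y) (δ : ℝ) : ℝ :=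
  sSup { r : ℝ | ∃ (x : X) (f : Y →L[𝕜] 𝕜), ‖x‖ = 1 ∧ ‖f‖ = 1 ∧
    1 - δ < RCLike.re (f (Q x)) ∧ r = ‖f (P x)‖ }

/-- The numerical radius of `P` with respect to `Q`, as `inf_{δ>0} v_{Q,δ}(P)`. -/
def numRad (𝕜 : Type*) [RCLike 𝕜] {X Y : Type*} [NormedAddCommGroup X] [NormedSpace 𝕜 X]
    [NormedAddCommGroup Y] [NormedSpace 𝕜 Y] (Q P : X → Y) : ℝ :=
  sInf { r : ℝ | ∃ δ : ℝ, 0 < δ ∧ r = vQdelta 𝕜 Q P δ }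

/-- The approximated spatial numerical range `V_Q(P)`. -/
def VQ (𝕜 : Type*) [RCLike 𝕜] {X Y : Type*} [NormedAddCommGroup X] [NormedSpace 𝕜 X]
    [NormedAddCommGroup Y] [NormedSpace 𝕜 Y] (Q P : X → Y) : Set 𝕜 :=
  ⋂ δ ∈ Set.Ioi (0 : ℝ), closure { z : 𝕜 | ∃ (x : X) (f : Y →L[𝕜] 𝕜), ‖x‖ = 1 ∧ ‖f‖ = 1 ∧
    1 - δ < RCLike.re (f (Q x)) ∧ z = f (P x) }

/-- The polynomial numerical index `n_Q^{(k)}(X,Y)`. -/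
def polyIndex (𝕜 : Type*) [RCLike 𝕜] {X Y : Type*} [NormedAddCommGroup X] [NormedSpace 𝕜 X]
    [NormedAddCommGroup Y] [NormedSpace 𝕜 Y] (k : ℕ) (Q : X → Y) : ℝ :=
  sInf { r : ℝ | ∃ P : X → Y, IsHomPoly 𝕜 k P ∧ polyNorm P = 1 ∧ r = numRad 𝕜 Q P }

/-- The classical numerical radius of a bounded linear operator. -/
def numRadOp (𝕜 : Type*) [RCLike 𝕜] {Y : Type*} [NormedAddCommGroup Y] [NormedSpace 𝕜 Y]
    (T : Y →L[𝕜] Y) : ℝ :=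
  sSup { r : ℝ | ∃ (y : Y) (f : Y →L[𝕜] 𝕜), ‖y‖ = 1 ∧ ‖f‖ = 1 ∧ f y = 1 ∧ r = ‖f (T y)‖ }

end

/-!
Since `T` is an isometry, `T ∘ Q` is again a `k`-homogeneous polynomial of norm one, so it
suffices to show `v_Q(T ∘ Q) ≤ v(T)`. If `‖x‖ = 1`, `‖y*‖ = 1` and `Re y*(Q x) > 1 - κ²`, the
Bishop–Phelps–Bollobás theorem gives `u`, `g` with `‖u‖ = ‖g‖ = g u = 1`, `‖u - Q x‖ ≤ κ` and
`‖y* - g‖ ≤ 12 κ`, whence `|y*(T Q x)| ≤ |g (T u)| + 13 κ ‖T‖ ≤ v(T) + 13 κ ‖T‖`; let `κ → 0`.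

The Bishop–Phelps–Bollobás theorem is proved for real functionals and transferred to `𝕜` through
real parts. Ekeland's variational principle applied to `-Re y*` on the unit ball produces `u`;
the Bishop–Phelps cone `{v | κ ‖v‖ < Re y* v}` translated to `u` misses the ball, and a
Hahn–Banach functional separating them is `g`; a functional positive on that cone and equal to
`1` at `u` differs from `Re y*` by `O(κ)` on `ker (Re y*)`, hence everywhere.
-/

open Filter Topology Set Metric

theorem exists_forall_lt_add {α : Type*} {φ : α → ℝ} {s : Set α} (hs : s.Nonempty)
    (hbdd : BddBelow (φ '' s)) {ε : ℝ} (hε : 0 < ε) : ∃ z ∈ s, ∀ w ∈ s, φ z < φ w + ε := by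
  obtain ⟨_, ⟨z, hz, rfl⟩, hlt⟩ :=
    exists_lt_of_csInf_lt (hs.image φ) (lt_add_of_pos_right (sInf (φ '' s)) hε)
  exact ⟨z, hz, fun w hw => hlt.trans_le (by gcongr; exact csInf_le hbdd ⟨w, hw, rfl⟩)⟩

section Ekeland

variable {M : Type*} [PseudoMetricSpace M]

def ekelandSet (B : Set M) (φ : M → ℝ) (κ : ℝ) (v : M) : Set M :=
  {z | z ∈ B ∧ φ z + κ * dist z v ≤ φ v}

variable {B : Set M} {φ : M → ℝ} {κ : ℝ}

theorem mem_ekelandSet_self {v : M} (hv : v ∈ B) : v ∈ ekelandSet B φ κ v :=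
  ⟨hv, by simp⟩

theorem ekelandSet_subset (hκ : 0 ≤ κ) {u v : M} (hv : v ∈ ekelandSet B φ κ u) :
    ekelandSet B φ κ v ⊆ ekelandSet B φ κ u := fun w ⟨hwB, hw⟩ =>
  ⟨hwB, by nlinarith [hv.2, dist_triangle w v u]⟩

theorem isClosed_ekelandSet (hB : IsClosed B) (hφ : LowerSemicontinuous φ) (v : M) :
    IsClosed (ekelandSet B φ κ v) :=
  hB.inter <| (hφ.add (continuous_const.mul (continuous_id.dist continuous_const)
    |>.lowerSemicontinuous)).isClosed_preimage (φ v)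

theorem exists_seq_ekelandSet (hbdd : BddBelow (φ '' B)) {x₀ : M} (hx₀ : x₀ ∈ B) :
    ∃ F : ℕ → M, F 0 = x₀ ∧ ∀ n, F (n + 1) ∈ ekelandSet B φ κ (F n) ∧
      ∀ w ∈ ekelandSet B φ κ (F n), φ (F (n + 1)) < φ w + (1 / 2) ^ n := by
  have step : ∀ n : ℕ, ∀ v ∈ B, ∃ z ∈ ekelandSet B φ κ v,
      ∀ w ∈ ekelandSet B φ κ v, φ z < φ w + (1 / 2) ^ n := fun n v hv =>
    exists_forall_lt_add ⟨v, mem_ekelandSet_self hv⟩ (hbdd.mono (image_mono fun _ hz => hz.1))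
      (by positivity)
  choose! next hnext using step
  let F : ℕ → M := fun n => Nat.rec x₀ (fun n v => next n v) n
  have hFB : ∀ n, F n ∈ B := fun n => by
    induction n with
    | zero => exact hx₀
    | succ n ih => exact (hnext n (F n) ih).1.1
  exact ⟨F, rfl, fun n => hnext n (F n) (hFB n)⟩

theorem ekeland_variational_principle [CompleteSpace M] (hB : IsClosed B)
    (hφ : LowerSemicontinuous φ) (hbdd : BddBelow (φ '' B)) (hκ : 0 < κ) {x₀ : M} (hx₀ : x₀ ∈ B) :
    ∃ u ∈ B, φ u + κ * dist u x₀ ≤ φ x₀ ∧ ∀ z ∈ B, φ u ≤ φ z + κ * dist z u := by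
  obtain ⟨F, hF0, hF⟩ := exists_seq_ekelandSet (κ := κ) hbdd hx₀
  set S := ekelandSet B φ κ
  have hsub : ∀ n, S (F (n + 2)) ⊆ S (F (n + 1)) := fun n => ekelandSet_subset hκ.le (hF _).1
  have hrad : ∀ n, ∀ z ∈ S (F (n + 1)), κ * dist z (F (n + 1)) < (1 / 2) ^ n := fun n z hz => by
    have := (hF n).2 z (ekelandSet_subset hκ.le (hF n).1 hz)
    linarith [hz.2]
  have hcauchy : CauchySeq fun n => F (n + 1) := by
    refine cauchySeq_of_le_geometric_two (C := 2 / κ) fun n => ?_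
    have := hrad n _ (hF (n + 1)).1
    rw [dist_comm, show 2 / κ / 2 / 2 ^ n = (1 / 2) ^ n / κ by rw [one_div_pow]; ring,
      le_div_iff₀ hκ]
    linarith
  obtain ⟨u, hu⟩ := cauchySeq_tendsto_of_complete hcauchy
  have huS : ∀ n, u ∈ S (F (n + 1)) := fun n =>
    (isClosed_ekelandSet hB hφ _).mem_of_tendsto hu <| by
      filter_upwards [eventually_ge_atTop n] with m hm
      exact antitone_nat_of_succ_le (f := fun n => S (F (n + 1))) hsub hm
        (mem_ekelandSet_self (hF m).1.1)
  have hmin : ∀ z ∈ S u, φ u ≤ φ z := fun z hz => by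
    refine le_of_forall_pos_lt_add fun ε hε => ?_
    obtain ⟨n, hn⟩ := exists_pow_lt_of_lt_one hε (by norm_num : (1 / 2 : ℝ) < 1)
    have := (hF n).2 z (ekelandSet_subset hκ.le (hF n).1 (ekelandSet_subset hκ.le (huS n) hz))
    nlinarith [(huS n).2, mul_nonneg hκ.le (dist_nonneg (x := u) (y := F (n + 1)))]
  refine ⟨u, (huS 0).1, ?_, fun z hz => ?_⟩
  · rw [← hF0]; exact (ekelandSet_subset hκ.le (hF 0).1 (huS 0)).2
  · by_cases hzS : z ∈ S u
    · linarith [hmin z hzS, mul_nonneg hκ.le (dist_nonneg (x := z) (y := u))]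
    · exact (not_le.1 fun h => hzS ⟨hz, h⟩).le

end Ekeland

section BishopPhelps

variable {E : Type*} [NormedAddCommGroup E] [NormedSpace ℝ E]

theorem opNorm_le_one_of_forall_closedBall {ψ : StrongDual ℝ E} (h : ∀ z, ‖z‖ ≤ 1 → ψ z ≤ 1) :
    ‖ψ‖ ≤ 1 :=
  ContinuousLinearMap.opNorm_le_of_unit_norm zero_le_one fun z hz => by
    have := h (-z) (by rw [norm_neg, hz])
    rw [map_neg] at this
    rw [Real.norm_eq_abs, abs_le]
    exact ⟨by linarith, h z hz.le⟩

theorem convex_setOf_mul_norm_lt (ρ : StrongDual ℝ E) {κ : ℝ} (hκ : 0 ≤ κ) :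
    Convex ℝ {v : E | κ * ‖v‖ < ρ v} := by
  simpa only [mem_univ, true_and, Pi.sub_apply, smul_eq_mul, sub_neg,
    ContinuousLinearMap.coe_coe] using
    (((convexOn_norm convex_univ).smul hκ).sub (ρ.toLinearMap.concaveOn convex_univ)).convex_lt 0

theorem abs_apply_mul_le_of_pos_on_cone {ρ ψ : StrongDual ℝ E} {u w : E} {κ : ℝ} (hκ : 0 ≤ κ)
    (hcone : ∀ v, κ * ‖v‖ < ρ v → 0 < ψ v) (hψu : ψ u = 1) (hρu : κ * ‖u‖ < ρ u)
    (hw : ρ w = 0) : |ψ w| * (ρ u - κ * ‖u‖) ≤ κ * ‖w‖ := by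
  set d := ρ u - κ * ‖u‖
  have hd : 0 < d := sub_pos.2 hρu
  have key : ∀ s : ℝ, |s| = d → ∀ η > 0, 0 < κ * ‖w‖ + η + s * ψ w := fun s hs η hη => by
    have hn : ‖(κ * ‖w‖ + η) • u + s • w‖ ≤ (κ * ‖w‖ + η) * ‖u‖ + d * ‖w‖ := by
      refine (norm_add_le _ _).trans_eq ?_
      rw [norm_smul, norm_smul, Real.norm_eq_abs, Real.norm_eq_abs, hs,
        abs_of_pos (by positivity)]
    have hv : κ * ‖(κ * ‖w‖ + η) • u + s • w‖ < ρ ((κ * ‖w‖ + η) • u + s • w) := by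
      rw [map_add, map_smul, map_smul, hw, smul_eq_mul, smul_eq_mul, mul_zero, add_zero]
      nlinarith [mul_le_mul_of_nonneg_left hn hκ, mul_pos hη hd]
    simpa [hψu] using hcone _ hv
  refine le_of_forall_pos_le_add fun η hη => ?_
  have h₁ := key d (abs_of_pos hd) η hη
  have h₂ := key (-d) (by rw [abs_neg, abs_of_pos hd]) η hη
  cases abs_cases (ψ w) <;> nlinarith

theorem exists_supportingFunctional_pos_on_cone {ρ : StrongDual ℝ E} {u : E} {κ : ℝ} (hκ : 0 ≤ κ)
    (hu : ‖u‖ ≤ 1) (hρu : κ * ‖u‖ < ρ u) (hmax : ∀ z, ‖z‖ ≤ 1 → ρ z ≤ ρ u + κ * ‖z - u‖) :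
    ∃ ψ : StrongDual ℝ E, ψ u = 1 ∧ (∀ z, ‖z‖ ≤ 1 → ψ z ≤ 1) ∧
      ∀ v, κ * ‖v‖ < ρ v → 0 < ψ v := by
  have hdisj : Disjoint {v : E | κ * ‖v‖ < ρ v} (closedBall (-u) 1) := by
    refine Set.disjoint_left.2 fun v hv hvB => ?_
    rw [mem_closedBall, dist_eq_norm, sub_neg_eq_add] at hvB
    have := hmax (v + u) hvB
    rw [map_add, add_sub_cancel_right] at this
    have hv : κ * ‖v‖ < ρ v := hv
    linarith
  obtain ⟨φ, c, hφU, hφB⟩ := geometric_hahn_banach_open (convex_setOf_mul_norm_lt ρ hκ)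
    (isOpen_lt (by fun_prop) ρ.continuous) (convex_closedBall (-u) 1) hdisj
  have hc : c ≤ 0 := by simpa using hφB 0 (by simpa using hu)
  have hneg : ∀ v, κ * ‖v‖ < ρ v → φ v < 0 := fun v hv => (hφU v hv).trans_le hc
  have hφu : φ u < 0 := hneg u hρu
  have hc' : 0 ≤ c := by
    refine le_of_tendsto (f := fun t : ℝ => t * φ u) (x := 𝓝[>] 0)
      (by simpa using ((continuous_mul_const (φ u)).tendsto 0).mono_left nhdsWithin_le_nhds)
      (eventually_nhdsWithin_of_forall fun t (ht : 0 < t) => ?_)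
    have htu : κ * ‖t • u‖ < ρ (t • u) := by
      rw [norm_smul, map_smul, smul_eq_mul, Real.norm_eq_abs, abs_of_pos ht]
      nlinarith
    simpa using (hφU _ htu).le
  have hmin : ∀ z, ‖z‖ ≤ 1 → φ u ≤ φ z := fun z hz => by
    have := hφB (z - u) (by rwa [mem_closedBall, dist_eq_norm, sub_neg_eq_add, sub_add_cancel])
    rw [map_sub] at this
    linarith
  refine ⟨(φ u)⁻¹ • φ, by simp [hφu.ne], fun z hz => ?_, fun v hv => ?_⟩
  · simpa [inv_mul_eq_div] using (div_le_one_of_neg hφu).2 (hmin z hz)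
  · simpa [inv_mul_eq_div] using div_pos_of_neg_of_neg (hneg v hv) hφu

theorem norm_sub_le_of_pos_on_cone {ρ ψ : StrongDual ℝ E} {u : E} {κ : ℝ} (hκ0 : 0 ≤ κ)
    (hκ : κ ≤ 1 / 2) (hρ : ‖ρ‖ ≤ 1) (hu : ‖u‖ = 1) (hψu : ψ u = 1) (hρu : 1 - κ ^ 2 < ρ u)
    (hcone : ∀ v, κ * ‖v‖ < ρ v → 0 < ψ v) : ‖ρ - ψ‖ ≤ 12 * κ := by
  have hρabs : ∀ z, |ρ z| ≤ ‖z‖ := fun z =>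
    (ρ.le_opNorm z).trans (mul_le_of_le_one_left (norm_nonneg z) hρ)
  set r := ρ u
  have hr1 : r ≤ 1 := (le_abs_self r).trans (hu ▸ hρabs u)
  have hr : 3 / 4 ≤ r := by nlinarith
  refine ContinuousLinearMap.opNorm_le_bound _ (by positivity) fun w => ?_
  rw [sub_apply, Real.norm_eq_abs]
  set w' := r • w - ρ w • u
  have hρw' : ρ w' = 0 := by simp [w', r, mul_comm]
  have hψw' : ψ w' = r * ψ w - ρ w := by simp [w', hψu]
  have hnorm : ‖w'‖ ≤ 2 * ‖w‖ := by
    refine (norm_sub_le _ _).trans ?_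
    rw [norm_smul, norm_smul, Real.norm_eq_abs, Real.norm_eq_abs, hu, abs_of_pos (by linarith)]
    nlinarith [hρabs w, norm_nonneg w]
  have hker := abs_apply_mul_le_of_pos_on_cone hκ0 hcone hψu (by rw [hu]; linarith) hρw'
  rw [hu, mul_one] at hker
  have h₁ : |ψ w'| ≤ 8 * κ * ‖w‖ := by nlinarith [abs_nonneg (ψ w')]
  have h₂ : r * (ρ w - ψ w) = -ψ w' - (1 - r) * ρ w := by rw [hψw']; ring
  have h₃ : r * |ρ w - ψ w| ≤ |ψ w'| + (1 - r) * |ρ w| := by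
    rw [← abs_of_pos (by linarith : 0 < r), ← abs_mul, h₂, abs_of_pos (by linarith : 0 < r)]
    refine (abs_sub _ _).trans ?_
    rw [abs_neg, abs_mul, abs_of_nonneg (by linarith : 0 ≤ 1 - r)]
  nlinarith [hρabs w, abs_nonneg (ρ w - ψ w), norm_nonneg w]

theorem exists_bishopPhelpsBollobas [CompleteSpace E] {ρ : StrongDual ℝ E} (hρ : ‖ρ‖ ≤ 1)
    {y₀ : E} (hy₀ : ‖y₀‖ ≤ 1) {κ : ℝ} (hκ0 : 0 < κ) (hκ : κ ≤ 1 / 2) (h : 1 - κ ^ 2 < ρ y₀) :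
    ∃ (u : E) (ψ : StrongDual ℝ E), ‖u‖ = 1 ∧ ‖ψ‖ = 1 ∧ ψ u = 1 ∧ ‖u - y₀‖ ≤ κ ∧
      ‖ρ - ψ‖ ≤ 12 * κ := by
  have hρle : ∀ z, ρ z ≤ ‖z‖ := fun z =>
    (le_abs_self _).trans ((ρ.le_opNorm z).trans (mul_le_of_le_one_left (norm_nonneg z) hρ))
  have hbdd : BddBelow ((fun z => -ρ z) '' closedBall 0 1) := ⟨-1, by
    rintro _ ⟨z, hz, rfl⟩
    linarith [hρle z, mem_closedBall_zero_iff.1 hz]⟩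
  obtain ⟨u, hu, hudist, humax⟩ := ekeland_variational_principle isClosed_closedBall
    ρ.continuous.neg.lowerSemicontinuous hbdd hκ0 (mem_closedBall_zero_iff.2 hy₀)
  rw [mem_closedBall_zero_iff] at hu
  simp only [Pi.neg_apply, dist_eq_norm] at hudist humax
  have hρu : 1 - κ ^ 2 < ρ u := by nlinarith [norm_nonneg (u - y₀)]
  have hdist : ‖u - y₀‖ ≤ κ := by nlinarith [hρle u]
  obtain ⟨ψ, hψu, hψ1, hcone⟩ := exists_supportingFunctional_pos_on_cone hκ0.le hu (by nlinarith)
    fun z hz => by linarith [humax z (mem_closedBall_zero_iff.2 hz)]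
  have hψ : ‖ψ‖ ≤ 1 := opNorm_le_one_of_forall_closedBall hψ1
  have hψu' : 1 ≤ ‖ψ‖ * ‖u‖ := by simpa [hψu] using ψ.le_opNorm u
  have hunorm : ‖u‖ = 1 :=
    le_antisymm hu (hψu'.trans (mul_le_of_le_one_left (norm_nonneg u) hψ))
  have hψnorm : ‖ψ‖ = 1 :=
    le_antisymm hψ (hψu'.trans (mul_le_of_le_one_right (norm_nonneg ψ) hu))
  exact ⟨u, ψ, hunorm, hψnorm, hψu, hdist,
    norm_sub_le_of_pos_on_cone hκ0.le hκ hρ hunorm hψu hρu hcone⟩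

end BishopPhelps

section RCLike

open RCLike

variable {𝕜 : Type*} [RCLike 𝕜]

theorem RCLike.eq_one_of_re_eq_one_of_norm_le_one {z : 𝕜} (hre : re z = 1) (hz : ‖z‖ ≤ 1) :
    z = 1 := by
  have h := norm_sq_eq_def (K := 𝕜) (z := z)
  have him : im z = 0 := by nlinarith [norm_nonneg z, mul_self_nonneg (im z)]
  exact RCLike.ext (by simp [hre]) (by simp [him])

variable {Y : Type*} [NormedAddCommGroup Y] [NormedSpace 𝕜 Y]

theorem exists_bishopPhelpsBollobas_rclike [CompleteSpace Y] {f : StrongDual 𝕜 Y} (hf : ‖f‖ ≤ 1)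
    {y₀ : Y} (hy₀ : ‖y₀‖ ≤ 1) {κ : ℝ} (hκ0 : 0 < κ) (hκ : κ ≤ 1 / 2)
    (h : 1 - κ ^ 2 < re (f y₀)) :
    ∃ (u : Y) (g : StrongDual 𝕜 Y), ‖u‖ = 1 ∧ ‖g‖ = 1 ∧ g u = 1 ∧ ‖u - y₀‖ ≤ κ ∧
      ‖f - g‖ ≤ 12 * κ := by
  let _ : NormedSpace ℝ Y := NormedSpace.restrictScalars ℝ 𝕜 Y
  set ρ := StrongDual.extendRCLikeₗᵢ.symm f
  have hρ : ‖ρ‖ ≤ 1 := by rwa [LinearIsometryEquiv.norm_map]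
  obtain ⟨u, ψ, hu, hψ, hψu, hdist, hρψ⟩ := exists_bishopPhelpsBollobas hρ hy₀ hκ0 hκ h
  set g := StrongDual.extendRCLikeₗᵢ (𝕜 := 𝕜) ψ
  have hg : ‖g‖ = 1 := by rwa [LinearIsometryEquiv.norm_map]
  have hgu : g u = 1 := eq_one_of_re_eq_one_of_norm_le_one
    (by simp [g, StrongDual.extendRCLikeₗᵢ_apply, hψu]) (by simpa [hg, hu] using g.le_opNorm u)
  refine ⟨u, g, hu, hg, hgu, hdist, ?_⟩
  rwa [show f - g = StrongDual.extendRCLikeₗᵢ (ρ - ψ) by simp [ρ, g],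
    LinearIsometryEquiv.norm_map]

theorem norm_apply_le_numRadOp (T : Y →L[𝕜] Y) {y : Y} {g : StrongDual 𝕜 Y} (hy : ‖y‖ = 1)
    (hg : ‖g‖ = 1) (hgy : g y = 1) : ‖g (T y)‖ ≤ numRadOp 𝕜 T := by
  refine le_csSup ⟨‖T‖, ?_⟩ ⟨y, g, hy, hg, hgy, rfl⟩
  rintro _ ⟨y', g', hy', hg', -, rfl⟩
  simpa [hg', hy'] using g'.le_opNorm_of_le (T.le_opNorm y')

theorem numRadOp_nonneg (T : Y →L[𝕜] Y) : 0 ≤ numRadOp 𝕜 T :=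
  Real.sSup_nonneg fun _ ⟨_, _, _, _, _, hr⟩ => hr ▸ norm_nonneg _

theorem norm_apply_le_numRadOp_add [CompleteSpace Y] (T : Y →L[𝕜] Y) {f : StrongDual 𝕜 Y}
    (hf : ‖f‖ ≤ 1) {y : Y} (hy : ‖y‖ ≤ 1) {κ : ℝ} (hκ0 : 0 < κ) (hκ : κ ≤ 1 / 2)
    (h : 1 - κ ^ 2 < re (f y)) : ‖f (T y)‖ ≤ numRadOp 𝕜 T + 13 * κ * ‖T‖ := by
  obtain ⟨u, g, hu, hg, hgu, hdist, hfg⟩ := exists_bishopPhelpsBollobas_rclike hf hy hκ0 hκ h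
  have h₁ : ‖f (T (y - u))‖ ≤ κ * ‖T‖ := calc
    ‖f (T (y - u))‖ ≤ 1 * (‖T‖ * κ) :=
      f.le_of_opNorm_le_of_le hf (T.le_opNorm_of_le (by rwa [norm_sub_rev]))
    _ = κ * ‖T‖ := by ring
  have h₂ : ‖(f - g) (T u)‖ ≤ 12 * κ * ‖T‖ :=
    (f - g).le_of_opNorm_le_of_le hfg (T.le_opNorm_of_le hu.le) |>.trans_eq (by ring)
  have h₃ := norm_apply_le_numRadOp T hu hg hgu
  calc ‖f (T y)‖ = ‖f (T (y - u)) + (f - g) (T u) + g (T u)‖ := by simp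
    _ ≤ ‖f (T (y - u))‖ + ‖(f - g) (T u)‖ + ‖g (T u)‖ := norm_add₃_le
    _ ≤ numRadOp 𝕜 T + 13 * κ * ‖T‖ := by linarith

end RCLike

section NumericalIndex

variable {𝕜 : Type*} [RCLike 𝕜] {X Y Z : Type*} [NormedAddCommGroup X] [NormedSpace 𝕜 X]
  [NormedAddCommGroup Y] [NormedSpace 𝕜 Y] [NormedAddCommGroup Z] [NormedSpace 𝕜 Z]

theorem IsHomPoly.clm_comp {k : ℕ} {P : X → Y} (hP : IsHomPoly 𝕜 k P) (L : Y →L[𝕜] Z) :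
    IsHomPoly 𝕜 k (L ∘ P) := by
  obtain ⟨A, hA⟩ := hP
  exact ⟨L.compContinuousMultilinearMap A, fun x => by simp [hA]⟩

theorem IsHomPoly.norm_apply_le_polyNorm {k : ℕ} {P : X → Y} (hP : IsHomPoly 𝕜 k P) {x : X}
    (hx : ‖x‖ ≤ 1) : ‖P x‖ ≤ polyNorm P := by
  obtain ⟨A, hA⟩ := hP
  refine le_csSup ⟨‖A‖, ?_⟩ ⟨x, hx, rfl⟩
  rintro _ ⟨x', hx', rfl⟩
  rw [hA]
  exact (A.le_opNorm _).trans <| mul_le_of_le_one_right (norm_nonneg A) <|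
    Finset.prod_le_one (fun _ _ => norm_nonneg _) fun _ _ => hx'

theorem polyNorm_comp_of_norm_map {P : X → Y} {L : Y → Z} (hL : ∀ y, ‖L y‖ = ‖y‖) :
    polyNorm (L ∘ P) = polyNorm P := by
  simp [polyNorm, hL]

theorem vQdelta_nonneg (Q P : X → Y) (δ : ℝ) : 0 ≤ vQdelta 𝕜 Q P δ :=
  Real.sSup_nonneg fun _ ⟨_, _, _, _, _, hr⟩ => hr ▸ norm_nonneg _

theorem numRad_nonneg (Q P : X → Y) : 0 ≤ numRad 𝕜 Q P :=
  Real.sInf_nonneg fun _ ⟨δ, _, hr⟩ => hr ▸ vQdelta_nonneg Q P δ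

theorem numRad_le_vQdelta (Q P : X → Y) {δ : ℝ} (hδ : 0 < δ) :
    numRad 𝕜 Q P ≤ vQdelta 𝕜 Q P δ :=
  csInf_le ⟨0, fun _ ⟨δ, _, hr⟩ => hr ▸ vQdelta_nonneg Q P δ⟩ ⟨δ, hδ, rfl⟩

theorem polyIndex_le {k : ℕ} {Q P : X → Y} (hP : IsHomPoly 𝕜 k P) (hP1 : polyNorm P = 1) :
    polyIndex 𝕜 k Q ≤ numRad 𝕜 Q P :=
  csInf_le ⟨0, fun _ ⟨P, _, _, hr⟩ => hr ▸ numRad_nonneg Q P⟩ ⟨P, hP, hP1, rfl⟩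

theorem numRad_comp_le_numRadOp [CompleteSpace Y] {Q : X → Y}
    (hQ : ∀ x, ‖x‖ = 1 → ‖Q x‖ ≤ 1) (T : Y →L[𝕜] Y) :
    numRad 𝕜 Q (T ∘ Q) ≤ numRadOp 𝕜 T := by
  have hvQ : ∀ κ : ℝ, 0 < κ → κ ≤ 1 / 2 →
      vQdelta 𝕜 Q (T ∘ Q) (κ ^ 2) ≤ numRadOp 𝕜 T + 13 * κ * ‖T‖ := fun κ hκ0 hκ =>
    Real.sSup_le (fun _ ⟨x, f, hx, hf, hre, hr⟩ =>
        hr ▸ norm_apply_le_numRadOp_add T hf.le (hQ x hx) hκ0 hκ hre)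
      (add_nonneg (numRadOp_nonneg T) (by positivity))
  refine ge_of_tendsto (f := fun κ : ℝ => numRadOp 𝕜 T + 13 * κ * ‖T‖) (x := 𝓝[>] 0)
    ((Continuous.tendsto' (by fun_prop) 0 _ (by simp)).mono_left nhdsWithin_le_nhds) ?_
  filter_upwards [Ioc_mem_nhdsGT (by norm_num : (0 : ℝ) < 1 / 2)] with κ hκ
  exact (numRad_le_vQdelta Q _ (pow_pos hκ.1 2)).trans (hvQ κ hκ.1 hκ.2)

end NumericalIndex

theorem stmt_16_general (𝕜 : Type*) [RCLike 𝕜] (X Y : Type*) [NormedAddCommGroup X] [NormedSpace 𝕜 X]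
    [NormedAddCommGroup Y] [NormedSpace 𝕜 Y] [CompleteSpace Y]
    (k : ℕ) (Q : X → Y) (hQ : IsHomPoly 𝕜 k Q) (hQ1 : polyNorm Q = 1)
    (α : ℝ)
    (T : Y →L[𝕜] Y) (hiso : ∀ y, ‖T y‖ = ‖y‖)
    (hv : numRadOp 𝕜 T ≤ α) :
    polyIndex 𝕜 k Q ≤ α := by
  calc polyIndex 𝕜 k Q ≤ numRad 𝕜 Q (T ∘ Q) :=
        polyIndex_le (hQ.clm_comp T) (by rw [polyNorm_comp_of_norm_map hiso, hQ1])
    _ ≤ numRadOp 𝕜 T :=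
        numRad_comp_le_numRadOp (fun x hx => (hQ.norm_apply_le_polyNorm hx.le).trans hQ1.le) T
    _ ≤ α := hv

theorem stmt_16 (𝕜 : Type*) [RCLike 𝕜] (X Y : Type*) [NormedAddCommGroup X] [NormedSpace 𝕜 X]
    [NormedAddCommGroup Y] [NormedSpace 𝕜 Y] [CompleteSpace X] [CompleteSpace Y]
    (k : ℕ) (Q : X → Y) (hQ : IsHomPoly 𝕜 k Q) (hQ1 : polyNorm Q = 1)
    (α : ℝ) (hα0 : 0 ≤ α) (hα1 : α ≤ 1)
    (T : Y →L[𝕜] Y) (hsurj : Function.Surjective T) (hiso : ∀ y, ‖T y‖ = ‖y‖)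
    (hv : numRadOp 𝕜 T ≤ α) :
    polyIndex 𝕜 k Q ≤ α :=
  stmt_16_general 𝕜 X Y k Q hQ hQ1 α T hiso hv
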